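/- Let P satisfy Assumption (A) with constants ρ ∈ (0,1), C0 < ∞ and function V, and suppose the resampling schedule (a_k) satisfies δ_k → ∞ as k → ∞. Then ⦀L^(n) − π⦀_V → 0 as n → ∞; in particular the chain with resampling from the past has limit distribution π. -/

import Mathlib

open MeasureTheory Filter
open scoped ENNReal

namespace ResamplingFromThePastLimit

variable {X : Type*} [MeasurableSpace X]

/-- `iter P n` is the `n`-step transition kernel `P^n`. -/
noncomputable def iter (P : X → Measure X) : ℕ → X → Measure X
  | 0 => fun x => Measure.dirac x
  | n + 1 => fun x => (iter P n x).bind P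

/-- `u ρ a 1 = -a₁ log ρ` and `u ρ a k = log (a_k) - log (1/(1-ρ) + a_{k-1})` for `k ≥ 2`. -/
noncomputable def u (ρ : ℝ) (a : ℕ → ℕ) : ℕ → ℝ
  | 0 => 0
  | 1 => -(a 1 : ℝ) * Real.log ρ
  | k + 2 => Real.log (a (k + 2) : ℝ) - Real.log (1 / (1 - ρ) + (a (k + 1) : ℝ))

/-- `δ_k = Σ_{j=1}^k u_j`. -/
noncomputable def delta (ρ : ℝ) (a : ℕ → ℕ) (k : ℕ) : ℝ :=
  ∑ j ∈ Finset.Icc 1 k, u ρ a j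

/-!
By strong induction along the recursion of `L`, for every measurable `f` with `|f| ≤ V` and
every `m`, `|L^(n) P^m f (x) - π f| ≤ C0 ρ^m r_n V(x)`, where `r = rate` follows the recursion of
`L` with `P` replaced by multiplication by `ρ`: for `n = 0` this is (A), a deterministic step
turns `L^(n) P^m` into `L^(n-1) P^(m+1)` and gains the factor `ρ`, and a resampling step averages
the bounds of the past. Inside a block `[a_k, a_{k+1})` the sequence `r` decays geometrically, so
`r (a_{k+1}) ≤ (a_k + 1/(1-ρ)) / a_{k+1} * r (a_k) = exp (-u_{k+1}) * r (a_k)`; hence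
`r (a_k) ≤ exp (δ_1 - δ_k) → 0`, and `r` is largest at the start of each block.

Integrability of `V` under `π`, `P^m(x,·)` and `L^(n)(x,·)` comes from (A) applied to the
bounded functions `min V M`.
-/

open ProbabilityTheory Topology

theorem resampling_induction (a : ℕ → ℕ) {Q : ℕ → Prop} (zero : Q 0)
    (step : ∀ n, (¬ ∃ k, 1 ≤ k ∧ a k = n + 1) → Q n → Q (n + 1))
    (resample : ∀ k, 1 ≤ k → 0 < a k → (∀ j < a k, Q j) → Q (a k)) (n : ℕ) : Q n := by
  induction n using Nat.strong_induction_on with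
  | _ n ih =>
    rcases n with _ | n
    · exact zero
    by_cases hres : ∃ k, 1 ≤ k ∧ a k = n + 1
    · obtain ⟨k, hk, hak⟩ := hres
      exact hak ▸ resample k hk (by omega) (hak ▸ ih)
    · exact step n hres (ih n n.lt_succ_self)

section Schedule

variable {a : ℕ → ℕ}

theorem strictMono_schedule (hamono : ∀ k, 1 ≤ k → a k < a (k + 1)) :
    StrictMono fun k => a (k + 1) :=
  strictMono_nat_of_lt_succ fun k => hamono (k + 1) (Nat.le_add_left 1 k)

theorem not_resample_of_lt_of_lt (hamono : ∀ k, 1 ≤ k → a k < a (k + 1)) {k n : ℕ}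
    (hk : 1 ≤ k) (h₁ : a k < n) (h₂ : n < a (k + 1)) : ¬ ∃ j, 1 ≤ j ∧ a j = n := by
  rintro ⟨j, hj, rfl⟩
  obtain ⟨j, rfl⟩ := Nat.exists_eq_add_of_le' hj
  obtain ⟨k, rfl⟩ := Nat.exists_eq_add_of_le' hk
  have hmono := strictMono_schedule hamono
  rcases le_or_gt j k with h | h
  · exact absurd (hmono.monotone h) (by omega)
  · exact absurd (hmono.monotone (show k + 1 ≤ j from h)) (by omega)

theorem exists_mem_block (hamono : ∀ k, 1 ≤ k → a k < a (k + 1)) {K n : ℕ}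
    (hK : 1 ≤ K) (hn : a K ≤ n) : ∃ k, K ≤ k ∧ a k ≤ n ∧ n < a (k + 1) := by
  have hex : ∃ j, n < a (K + j + 1) :=
    ⟨n, by have : K + n ≤ a (K + n + 1) := (strictMono_schedule hamono).id_le (K + n); omega⟩
  classical
  refine ⟨K + Nat.find hex, by omega, ?_, Nat.find_spec hex⟩
  rcases h : Nat.find hex with _ | j
  · simpa using hn
  · simpa [← add_assoc] using Nat.find_min hex (h ▸ j.lt_succ_self)

end Schedule

open scoped Classical in
noncomputable def rate (ρ : ℝ) (a : ℕ → ℕ) : ℕ → ℝ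
  | 0 => 1
  | n + 1 =>
    if ∃ k, 1 ≤ k ∧ a k = n + 1 then (n + 1 : ℝ)⁻¹ * ∑ j : Fin (n + 1), rate ρ a j
    else ρ * rate ρ a n

section Rate

variable {ρ : ℝ} {a : ℕ → ℕ}

@[simp]
theorem rate_zero : rate ρ a 0 = 1 := by
  rw [rate]

theorem rate_succ_of_not_resample {n : ℕ} (h : ¬ ∃ k, 1 ≤ k ∧ a k = n + 1) :
    rate ρ a (n + 1) = ρ * rate ρ a n := by
  rw [rate, if_neg h]

theorem rate_resample {k : ℕ} (hk : 1 ≤ k) (hpos : 0 < a k) :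
    rate ρ a (a k) = (a k : ℝ)⁻¹ * ∑ j ∈ Finset.range (a k), rate ρ a j := by
  obtain ⟨n, hn⟩ := Nat.exists_eq_add_of_lt hpos
  rw [zero_add] at hn
  rw [hn, rate, if_pos ⟨k, hk, hn⟩, Fin.sum_univ_eq_sum_range (rate ρ a)]
  push_cast
  rfl

theorem rate_pos (hρ : 0 < ρ) (n : ℕ) : 0 < rate ρ a n := by
  induction n using resampling_induction a with
  | zero => simp
  | step n hres ih => rw [rate_succ_of_not_resample hres]; positivity
  | resample k hk hpos ih =>
    rw [rate_resample hk hpos]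
    have : 0 < ∑ j ∈ Finset.range (a k), rate ρ a j :=
      Finset.sum_pos (fun j hj => ih j (Finset.mem_range.1 hj)) (by simpa using hpos.ne')
    positivity

theorem rate_le_one (hρ0 : 0 < ρ) (hρ1 : ρ ≤ 1) (n : ℕ) : rate ρ a n ≤ 1 := by
  induction n using resampling_induction a with
  | zero => simp
  | step n hres ih =>
    rw [rate_succ_of_not_resample hres]
    exact mul_le_one₀ hρ1 (rate_pos hρ0 n).le ih
  | resample k hk hpos ih =>
    rw [rate_resample hk hpos, inv_mul_le_iff₀ (by positivity)]
    calc ∑ j ∈ Finset.range (a k), rate ρ a j ≤ ∑ _j ∈ Finset.range (a k), (1 : ℝ) :=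
          Finset.sum_le_sum fun j hj => ih j (Finset.mem_range.1 hj)
      _ = (a k : ℝ) * 1 := by simp

end Rate

section Decay

variable {ρ : ℝ} {a : ℕ → ℕ}

theorem rate_add_of_lt (hamono : ∀ k, 1 ≤ k → a k < a (k + 1)) {k m : ℕ} (hk : 1 ≤ k)
    (hm : a k + m < a (k + 1)) : rate ρ a (a k + m) = ρ ^ m * rate ρ a (a k) := by
  induction m with
  | zero => simp
  | succ m ih =>
    rw [← add_assoc, rate_succ_of_not_resample
      (not_resample_of_lt_of_lt hamono hk (by omega) (by omega)), ih (by omega), pow_succ']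
    ring

theorem rate_le_of_mem_block (hamono : ∀ k, 1 ≤ k → a k < a (k + 1)) (hρ0 : 0 < ρ)
    (hρ1 : ρ ≤ 1) {k n : ℕ} (hk : 1 ≤ k) (h₁ : a k ≤ n) (h₂ : n < a (k + 1)) :
    rate ρ a n ≤ rate ρ a (a k) := by
  obtain ⟨m, rfl⟩ := Nat.exists_eq_add_of_le h₁
  rw [rate_add_of_lt hamono hk h₂]
  exact mul_le_of_le_one_left (rate_pos hρ0 _).le (pow_le_one₀ hρ0.le hρ1)

theorem sum_range_rate_schedule {k : ℕ} (hk : 1 ≤ k) :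
    ∑ j ∈ Finset.range (a k), rate ρ a j = a k * rate ρ a (a k) := by
  rcases Nat.eq_zero_or_pos (a k) with h | h
  · simp [h]
  · rw [rate_resample hk h, mul_inv_cancel_left₀ (by positivity)]

theorem rate_schedule_succ_le (hamono : ∀ k, 1 ≤ k → a k < a (k + 1)) (hρ0 : 0 < ρ)
    (hρ1 : ρ < 1) {k : ℕ} (hk : 1 ≤ k) :
    rate ρ a (a (k + 1)) ≤ (a k + (1 - ρ)⁻¹) / a (k + 1) * rate ρ a (a k) := by
  have hlt := hamono k hk
  obtain ⟨d, hd⟩ := Nat.exists_eq_add_of_le hlt.le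
  have hsplit : ∑ j ∈ Finset.range (a (k + 1)), rate ρ a j
      = (a k + ∑ i ∈ Finset.range d, ρ ^ i) * rate ρ a (a k) := by
    rw [hd, Finset.sum_range_add, sum_range_rate_schedule hk, add_mul, Finset.sum_mul]
    refine congrArg _ (Finset.sum_congr rfl fun i hi => rate_add_of_lt hamono hk ?_)
    rw [Finset.mem_range] at hi
    omega
  have hr := rate_pos (a := a) hρ0 (a k)
  rw [rate_resample (by omega) (by omega), hsplit, ← mul_assoc, inv_mul_eq_div]
  have hgeom : ∑ i ∈ Finset.range d, ρ ^ i ≤ (1 - ρ)⁻¹ := by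
    have := geom_sum_Ico_le_of_lt_one (m := 0) (n := d) hρ0.le hρ1
    rwa [← Finset.range_eq_Ico, pow_zero, one_div] at this
  gcongr ?_ / _ * _
  linarith

theorem delta_succ (ρ : ℝ) (a : ℕ → ℕ) (k : ℕ) :
    delta ρ a (k + 1) = delta ρ a k + u ρ a (k + 1) := by
  rw [delta, delta, Finset.sum_Icc_succ_top (by omega)]

theorem exp_neg_u_succ (hamono : ∀ k, 1 ≤ k → a k < a (k + 1)) (hρ1 : ρ < 1) {k : ℕ}
    (hk : 1 ≤ k) : Real.exp (-u ρ a (k + 1)) = (a k + (1 - ρ)⁻¹) / a (k + 1) := by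
  obtain ⟨j, rfl⟩ := Nat.exists_eq_add_of_le' hk
  have hc : 0 < 1 / (1 - ρ) + (a (j + 1) : ℝ) := by
    have : 0 < 1 - ρ := by linarith
    positivity
  have ha : (0 : ℝ) < a (j + 1 + 1) := by
    exact_mod_cast (Nat.zero_le _).trans_lt (hamono (j + 1) hk)
  rw [u, neg_sub, Real.exp_sub, Real.exp_log hc, Real.exp_log ha, one_div, add_comm]

theorem rate_schedule_le_exp (hamono : ∀ k, 1 ≤ k → a k < a (k + 1)) (hρ0 : 0 < ρ)
    (hρ1 : ρ < 1) {k : ℕ} (hk : 1 ≤ k) :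
    rate ρ a (a k) ≤ Real.exp (delta ρ a 1 - delta ρ a k) := by
  induction k, hk using Nat.le_induction with
  | base => simpa using rate_le_one hρ0 hρ1.le (a 1)
  | succ k hk ih =>
    calc rate ρ a (a (k + 1))
        ≤ (a k + (1 - ρ)⁻¹) / a (k + 1) * rate ρ a (a k) :=
          rate_schedule_succ_le hamono hρ0 hρ1 hk
      _ ≤ Real.exp (-u ρ a (k + 1)) * Real.exp (delta ρ a 1 - delta ρ a k) := by
          rw [exp_neg_u_succ hamono hρ1 hk]
          gcongr
      _ = Real.exp (delta ρ a 1 - delta ρ a (k + 1)) := by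
          rw [← Real.exp_add, delta_succ ρ a k]
          congr 1
          ring

theorem tendsto_rate_atTop (hamono : ∀ k, 1 ≤ k → a k < a (k + 1)) (hρ0 : 0 < ρ)
    (hρ1 : ρ < 1) (hdelta : Tendsto (delta ρ a) atTop atTop) :
    Tendsto (rate ρ a) atTop (𝓝 0) := by
  refine tendsto_order.2
    ⟨fun b hb => Eventually.of_forall fun n => hb.trans (rate_pos hρ0 n), fun ε hε => ?_⟩
  obtain ⟨K, hK⟩ :=
    eventually_atTop.1 (hdelta.eventually_gt_atTop (delta ρ a 1 - Real.log ε))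
  refine eventually_atTop.2 ⟨a (max K 1), fun n hn => ?_⟩
  obtain ⟨k, hKk, hkn, hnk⟩ := exists_mem_block hamono (le_max_right K 1) hn
  have hk : 1 ≤ k := (le_max_right K 1).trans hKk
  calc rate ρ a n ≤ rate ρ a (a k) := rate_le_of_mem_block hamono hρ0 hρ1.le hk hkn hnk
    _ ≤ Real.exp (delta ρ a 1 - delta ρ a k) := rate_schedule_le_exp hamono hρ0 hρ1 hk
    _ < ε := by
      rw [← Real.exp_log hε, Real.exp_lt_exp]
      linarith [hK k ((le_max_left K 1).trans hKk)]

end Decay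

theorem abs_average_sub_le {N : ℕ} (hN : 0 < N) {I b : ℕ → ℝ} {c : ℝ}
    (h : ∀ j < N, |I j - c| ≤ b j) :
    |(N : ℝ)⁻¹ * ∑ j ∈ Finset.range N, I j - c| ≤ (N : ℝ)⁻¹ * ∑ j ∈ Finset.range N, b j := by
  have hN' : (N : ℝ) ≠ 0 := Nat.cast_ne_zero.2 hN.ne'
  have : (N : ℝ)⁻¹ * ∑ j ∈ Finset.range N, I j - c
      = (N : ℝ)⁻¹ * ∑ j ∈ Finset.range N, (I j - c) := by
    rw [Finset.sum_sub_distrib, Finset.sum_const, Finset.card_range, nsmul_eq_mul, mul_sub,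
      inv_mul_cancel_left₀ hN']
  rw [this, abs_mul, abs_of_nonneg (by positivity)]
  gcongr
  exact (Finset.abs_sum_le_sum_abs _ _).trans
    (Finset.sum_le_sum fun j hj => h j (Finset.mem_range.1 hj))

section Measure

variable {Y Z E : Type*} [MeasurableSpace Y] [MeasurableSpace Z]
  [NormedAddCommGroup E]

theorem integrable_of_forall_integral_min_le {μ : Measure Y} [IsFiniteMeasure μ] {g : Y → ℝ}
    (hg : Measurable g) (hg0 : ∀ y, 0 ≤ g y) {B : ℝ} (h : ∀ M : ℕ, ∫ y, min (g y) M ∂μ ≤ B) :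
    Integrable g μ := by
  have hmin : ∀ M : ℕ, Integrable (fun y => min (g y) M) μ := fun M =>
    (integrable_const (M : ℝ)).mono' (hg.min measurable_const).aestronglyMeasurable
      (ae_of_all _ fun y => by
        rw [Real.norm_of_nonneg (le_min (hg0 y) M.cast_nonneg)]
        exact min_le_right _ _)
  have hlim : Tendsto (fun M : ℕ => ∫⁻ y, ENNReal.ofReal (min (g y) M) ∂μ) atTop
      (𝓝 (∫⁻ y, ENNReal.ofReal (g y) ∂μ)) := by
    refine lintegral_tendsto_of_tendsto_of_monotone
      (fun M => (hmin M).aemeasurable.ennreal_ofReal)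
      (ae_of_all _ fun y M N hMN => ENNReal.ofReal_le_ofReal (min_le_min_left _ ?_))
      (ae_of_all _ fun y => tendsto_atTop_of_eventually_const (i₀ := ⌈g y⌉₊) fun M hM => ?_)
    · exact_mod_cast hMN
    · rw [min_eq_left (Nat.ceil_le.1 hM)]
  refine ⟨hg.aestronglyMeasurable, (hasFiniteIntegral_iff_ofReal (ae_of_all _ hg0)).2 ?_⟩
  refine (le_of_tendsto' hlim (b := ENNReal.ofReal B) fun M => ?_).trans_lt ENNReal.ofReal_lt_top
  rw [← ofReal_integral_eq_lintegral_ofReal (hmin M)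
    (ae_of_all _ fun y => le_min (hg0 y) M.cast_nonneg)]
  exact ENNReal.ofReal_le_ofReal (h M)

theorem abs_min_natCast_le {t : ℝ} (ht : 0 ≤ t) (M : ℕ) : |min t M| ≤ t := by
  rw [abs_of_nonneg (le_min ht M.cast_nonneg)]
  exact min_le_left _ _

theorem integral_bind_kernel [NormedSpace ℝ E] {μ : Measure Y} {η : Kernel Y Z} {g : Z → E}
    (hg : Integrable g (μ.bind η)) : ∫ z, g z ∂(μ.bind η) = ∫ y, ∫ z, g z ∂η y ∂μ := by
  rw [Measure.comp_eq_comp_const_apply] at hg ⊢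
  exact Kernel.integral_comp hg

theorem integrable_bind_kernel_iff {μ : Measure Y} {η : Kernel Y Z} {g : Z → E}
    (hg : AEStronglyMeasurable g (μ.bind η)) :
    Integrable g (μ.bind η) ↔
      (∀ᵐ y ∂μ, Integrable g (η y)) ∧ Integrable (fun y => ∫ z, ‖g z‖ ∂η y) μ := by
  rw [Measure.comp_eq_comp_const_apply] at hg ⊢
  exact integrable_comp_iff hg

variable {μ : ℕ → Measure Y} {N : ℕ}

theorem isProbabilityMeasure_average (hN : 0 < N)
    (hμ : ∀ j < N, IsProbabilityMeasure (μ j)) :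
    IsProbabilityMeasure ((N : ℝ≥0∞)⁻¹ • ∑ j ∈ Finset.range N, μ j) := by
  constructor
  rw [Measure.smul_apply, Measure.finsetSum_apply,
    Finset.sum_congr rfl fun j hj => (hμ j (Finset.mem_range.1 hj)).measure_univ]
  simp [ENNReal.inv_mul_cancel (Nat.cast_ne_zero.2 hN.ne') (ENNReal.natCast_ne_top N)]

theorem integrable_average (hN : 0 < N) {g : Y → E} (hg : ∀ j < N, Integrable g (μ j)) :
    Integrable g ((N : ℝ≥0∞)⁻¹ • ∑ j ∈ Finset.range N, μ j) :=
  (integrable_finsetSum_measure.2 fun j hj => hg j (Finset.mem_range.1 hj)).smul_measure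
    (ENNReal.inv_ne_top.2 (Nat.cast_ne_zero.2 hN.ne'))

theorem integral_average [NormedSpace ℝ E] {g : Y → E} (hg : ∀ j < N, Integrable g (μ j)) :
    ∫ y, g y ∂((N : ℝ≥0∞)⁻¹ • ∑ j ∈ Finset.range N, μ j)
      = (N : ℝ)⁻¹ • ∑ j ∈ Finset.range N, ∫ y, g y ∂μ j := by
  rw [integral_smul_measure, integral_finsetSum_measure fun j hj => hg j (Finset.mem_range.1 hj),
    ENNReal.toReal_inv, ENNReal.toReal_natCast]

end Measure

section KernelPow

variable {κ : Kernel X X}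

theorem iter_eq_pow (κ : Kernel X X) (n : ℕ) : iter ⇑κ n = ⇑(κ ^ n) := by
  induction n with
  | zero => funext x; exact (Kernel.id_apply x).symm
  | succ n ih => funext x; rw [iter, ih, pow_succ']; exact (Kernel.comp_apply κ (κ ^ n) x).symm

instance isMarkovKernel_pow [IsMarkovKernel κ] (n : ℕ) : IsMarkovKernel (κ ^ n) := by
  induction n with
  | zero => rw [pow_zero]; exact inferInstanceAs (IsMarkovKernel Kernel.id)
  | succ n ih => rw [pow_succ]; exact inferInstanceAs (IsMarkovKernel ((κ ^ n) ∘ₖ κ))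

theorem pow_zero_apply (κ : Kernel X X) (x : X) : (κ ^ 0) x = Measure.dirac x := by
  rw [pow_zero]
  exact Kernel.id_apply x

theorem integral_pow_zero (κ : Kernel X X) {f : X → ℝ} (hf : StronglyMeasurable f) (x : X) :
    ∫ y, f y ∂(κ ^ 0) x = f x := by
  rw [pow_zero_apply, integral_dirac' _ _ hf]

end KernelPow

/-- Assumption (A), stated for the kernel powers `κ ^ n`. -/
def IsGeometricallyErgodic (κ : Kernel X X) (π : Measure X) (V : X → ℝ) (C ρ : ℝ) : Prop :=
  ∀ f : X → ℝ, Measurable f → (∀ x, |f x| ≤ V x) → ∀ (n : ℕ) (x : X),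
    |∫ y, f y ∂(κ ^ n) x - ∫ y, f y ∂π| ≤ C * ρ ^ n * V x

namespace IsGeometricallyErgodic

variable {κ : Kernel X X} {π : Measure X} [IsProbabilityMeasure π] {V : X → ℝ} {C ρ : ℝ}

theorem integrable_limit (hA : IsGeometricallyErgodic κ π V C ρ) (hVmeas : Measurable V)
    (hV0 : ∀ x, 0 ≤ V x) : Integrable V π := by
  obtain ⟨x⟩ := nonempty_of_isProbabilityMeasure π
  refine integrable_of_forall_integral_min_le hVmeas hV0 (B := (1 + C) * V x) fun M => ?_
  have hM : ∀ y, |min (V y) M| ≤ V y := fun y => abs_min_natCast_le (hV0 y) M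
  have h := (abs_le.1 (hA _ (hVmeas.min measurable_const) hM 0 x)).1
  rw [pow_zero_apply, integral_dirac' _ _ (hVmeas.min measurable_const).stronglyMeasurable,
    pow_zero] at h
  linarith [hM x, le_abs_self (min (V x) M)]

theorem abs_integral_le (hA : IsGeometricallyErgodic κ π V C ρ) (hVmeas : Measurable V)
    (hV0 : ∀ x, 0 ≤ V x) {f : X → ℝ} (hf : Measurable f) (hfV : ∀ x, |f x| ≤ V x) (n : ℕ)
    (x : X) :
    |∫ y, f y ∂(κ ^ n) x| ≤ ∫ y, V y ∂π + C * ρ ^ n * V x := by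
  have hπ : |∫ y, f y ∂π| ≤ ∫ y, V y ∂π :=
    norm_integral_le_of_norm_le (f := f) (hA.integrable_limit hVmeas hV0) (ae_of_all _ hfV)
  linarith [abs_sub_abs_le_abs_sub (∫ y, f y ∂(κ ^ n) x) (∫ y, f y ∂π), hA f hf hfV n x]

theorem integrable_pow [IsMarkovKernel κ] (hA : IsGeometricallyErgodic κ π V C ρ)
    (hVmeas : Measurable V) (hV0 : ∀ x, 0 ≤ V x) (n : ℕ) (x : X) : Integrable V ((κ ^ n) x) := by
  refine integrable_of_forall_integral_min_le hVmeas hV0 (B := ∫ y, V y ∂π + C * ρ ^ n * V x)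
    fun M => ?_
  have hM : ∀ y, |min (V y) M| ≤ V y := fun y => abs_min_natCast_le (hV0 y) M
  exact (le_abs_self _).trans
    (hA.abs_integral_le hVmeas hV0 (hVmeas.min measurable_const) hM n x)

theorem integrable_integral_pow [IsMarkovKernel κ] (hA : IsGeometricallyErgodic κ π V C ρ)
    (hVmeas : Measurable V) (hV0 : ∀ x, 0 ≤ V x)
    {μ : Measure X} [IsFiniteMeasure μ] (hμ : Integrable V μ) {f : X → ℝ}
    (hf : Measurable f) (hfV : ∀ x, |f x| ≤ V x) (n : ℕ) :
    Integrable (fun y => ∫ z, f z ∂(κ ^ n) y) μ :=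
  ((integrable_const _).add (hμ.const_mul (C * ρ ^ n))).mono'
    hf.stronglyMeasurable.integral_kernel.aestronglyMeasurable
    (ae_of_all _ (hA.abs_integral_le hVmeas hV0 hf hfV n))

theorem integrable_bind [IsMarkovKernel κ] (hA : IsGeometricallyErgodic κ π V C ρ)
    (hVmeas : Measurable V) (hV0 : ∀ x, 0 ≤ V x) {μ : Measure X} [IsFiniteMeasure μ]
    (hμ : Integrable V μ) : Integrable V (μ.bind κ) := by
  refine (integrable_bind_kernel_iff hVmeas.aestronglyMeasurable).2 ⟨ae_of_all _ fun y => ?_, ?_⟩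
  · simpa using hA.integrable_pow hVmeas hV0 1 y
  · simpa using hA.integrable_integral_pow hVmeas hV0 hμ hVmeas.norm
      (fun y => (abs_norm (V y)).trans_le (Real.norm_of_nonneg (hV0 y)).le) 1

theorem integral_integral_pow_bind [IsMarkovKernel κ] (hA : IsGeometricallyErgodic κ π V C ρ)
    (hVmeas : Measurable V) (hV0 : ∀ x, 0 ≤ V x)
    {μ : Measure X} [IsFiniteMeasure μ] (hμ : Integrable V μ) {f : X → ℝ}
    (hf : Measurable f) (hfV : ∀ x, |f x| ≤ V x) (n : ℕ) :
    ∫ y, ∫ z, f z ∂(κ ^ n) y ∂(μ.bind κ) = ∫ y, ∫ z, f z ∂(κ ^ (n + 1)) y ∂μ := by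
  rw [integral_bind_kernel (hA.integrable_integral_pow hVmeas hV0
    (hA.integrable_bind hVmeas hV0 hμ) hf hfV n)]
  refine integral_congr_ae (ae_of_all _ fun y => ?_)
  rw [pow_succ]
  refine (Kernel.integral_comp ?_).symm
  exact (hA.integrable_pow hVmeas hV0 (n + 1) y).mono' hf.aestronglyMeasurable
    (ae_of_all _ hfV)

end IsGeometricallyErgodic

structure IsResamplingChain (P : X → Measure X) (a : ℕ → ℕ) (L : ℕ → X → Measure X) :
    Prop where
  zero : ∀ x, L 0 x = Measure.dirac x
  step : ∀ n : ℕ, 1 ≤ n → (¬ ∃ k, 1 ≤ k ∧ a k = n) → ∀ x, L n x = (L (n - 1) x).bind P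
  resample : ∀ k, 1 ≤ k →
    ∀ x, L (a k) x = ((a k : ℝ≥0∞))⁻¹ • ∑ j ∈ Finset.range (a k), L j x

namespace IsResamplingChain

variable {κ : Kernel X X} {a : ℕ → ℕ} {L : ℕ → X → Measure X}

theorem succ {P : X → Measure X} (hL : IsResamplingChain P a L) {n : ℕ}
    (h : ¬ ∃ k, 1 ≤ k ∧ a k = n + 1) (x : X) : L (n + 1) x = (L n x).bind P :=
  hL.step (n + 1) (Nat.le_add_left 1 n) h x

theorem isProbabilityMeasure [IsMarkovKernel κ] (hL : IsResamplingChain κ a L) (n : ℕ)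
    (x : X) : IsProbabilityMeasure (L n x) := by
  induction n using resampling_induction a with
  | zero => rw [hL.zero x]; infer_instance
  | step n hres ih => rw [hL.succ hres x]; infer_instance
  | resample k hk hpos ih => rw [hL.resample k hk x]; exact isProbabilityMeasure_average hpos ih

variable {π : Measure X} [IsProbabilityMeasure π] {V : X → ℝ} {C ρ : ℝ}

theorem integrable [IsMarkovKernel κ] (hL : IsResamplingChain κ a L)
    (hA : IsGeometricallyErgodic κ π V C ρ) (hVmeas : Measurable V) (hV0 : ∀ x, 0 ≤ V x)
    (n : ℕ) (x : X) : Integrable V (L n x) := by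
  induction n using resampling_induction a with
  | zero => rw [hL.zero x, ← pow_zero_apply κ]; exact hA.integrable_pow hVmeas hV0 0 x
  | step n hres ih =>
    have := hL.isProbabilityMeasure n x
    rw [hL.succ hres x]
    exact hA.integrable_bind hVmeas hV0 ih
  | resample k hk hpos ih => rw [hL.resample k hk x]; exact integrable_average hpos ih

theorem abs_integral_integral_pow_sub_le [IsMarkovKernel κ] (hL : IsResamplingChain κ a L)
    (hA : IsGeometricallyErgodic κ π V C ρ) (hVmeas : Measurable V) (hV0 : ∀ x, 0 ≤ V x)
    {f : X → ℝ} (hf : Measurable f) (hfV : ∀ x, |f x| ≤ V x) (x : X) (n m : ℕ) :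
    |∫ y, ∫ z, f z ∂(κ ^ m) y ∂(L n x) - ∫ y, f y ∂π| ≤ C * ρ ^ m * rate ρ a n * V x := by
  have hint : ∀ j l, Integrable (fun y => ∫ z, f z ∂(κ ^ l) y) (L j x) := fun j l =>
    have := hL.isProbabilityMeasure j x
    hA.integrable_integral_pow hVmeas hV0 (hL.integrable hA hVmeas hV0 j x) hf hfV l
  induction n using resampling_induction a generalizing m with
  | zero =>
    rw [hL.zero x, integral_dirac' _ _ hf.stronglyMeasurable.integral_kernel, rate_zero, mul_one]
    exact hA f hf hfV m x
  | step n hres ih =>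
    have := hL.isProbabilityMeasure n x
    rw [hL.succ hres x, hA.integral_integral_pow_bind hVmeas hV0
      (hL.integrable hA hVmeas hV0 n x) hf hfV m, rate_succ_of_not_resample hres]
    calc _ ≤ C * ρ ^ (m + 1) * rate ρ a n * V x := ih (m + 1)
      _ = C * ρ ^ m * (ρ * rate ρ a n) * V x := by ring
  | resample k hk hpos ih =>
    rw [hL.resample k hk x, integral_average fun j _ => hint j m, smul_eq_mul,
      rate_resample hk hpos]
    calc _ ≤ (a k : ℝ)⁻¹ * ∑ j ∈ Finset.range (a k), C * ρ ^ m * rate ρ a j * V x :=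
          abs_average_sub_le hpos fun j hj => ih j hj m
      _ = _ := by rw [← Finset.sum_mul, ← Finset.mul_sum]; ring

end IsResamplingChain

theorem limit_distribution_of_resampling_from_past_general
    (P : X → Measure X) (hPmeas : Measurable P)
    (hPprob : ∀ x, IsProbabilityMeasure (P x))
    (π : Measure X) (hπ : IsProbabilityMeasure π)
    (V : X → ℝ) (hVmeas : Measurable V) (hV1 : ∀ x, 1 ≤ V x)
    (ρ C0 : ℝ) (hρ0 : 0 < ρ) (hρ1 : ρ < 1)
    -- Assumption (A): `⦀P^n − π⦀_V ≤ C0 ρ^n` for all `n ≥ 0`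
    (hA : ∀ f : X → ℝ, Measurable f → (∀ x, |f x| ≤ V x) →
      ∀ (n : ℕ) (x : X),
        |∫ y, f y ∂(iter P n x) - ∫ y, f y ∂π| ≤ C0 * ρ ^ n * V x)
    -- the resampling schedule: a strictly increasing sequence of positive integers
    (a : ℕ → ℕ) (hamono : ∀ k, 1 ≤ k → a k < a (k + 1))
    -- the resampling schedule satisfies `δ_k → ∞`
    (hdelta : Tendsto (delta ρ a) atTop atTop)
    -- the laws `L^(n)(x,·)` of the chain with resampling from the past, burn-in 0
    (L : ℕ → X → Measure X)
    (hL0 : ∀ x, L 0 x = Measure.dirac x)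
    (hLstep : ∀ n : ℕ, 1 ≤ n → (¬ ∃ k, 1 ≤ k ∧ a k = n) →
      ∀ x, L n x = (L (n - 1) x).bind P)
    (hLres : ∀ k, 1 ≤ k →
      ∀ x, L (a k) x = ((a k : ℝ≥0∞))⁻¹ • ∑ j ∈ Finset.range (a k), L j x) :
    ∀ ε : ℝ, 0 < ε → ∃ N : ℕ, ∀ n : ℕ, N ≤ n →
      ∀ f : X → ℝ, Measurable f → (∀ x, |f x| ≤ V x) →
        ∀ x, |∫ y, f y ∂(L n x) - ∫ y, f y ∂π| ≤ ε * V x := by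
  let κ : Kernel X X := ⟨P, hPmeas⟩
  have : IsMarkovKernel κ := ⟨hPprob⟩
  have hV0 : ∀ x, 0 ≤ V x := fun x => zero_le_one.trans (hV1 x)
  have hκ : IsGeometricallyErgodic κ π V C0 ρ := fun f hf hfV n x => by
    rw [← iter_eq_pow]
    exact hA f hf hfV n x
  have hL : IsResamplingChain κ a L := ⟨hL0, hLstep, hLres⟩
  have hrate := (tendsto_rate_atTop hamono hρ0 hρ1 hdelta).const_mul C0
  rw [mul_zero] at hrate
  intro ε hε
  obtain ⟨N, hN⟩ := eventually_atTop.1 (hrate.eventually (ge_mem_nhds hε))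
  refine ⟨N, fun n hn f hf hfV x => ?_⟩
  have h := hL.abs_integral_integral_pow_sub_le hκ hVmeas hV0 hf hfV x n 0
  simp only [integral_pow_zero κ hf.stronglyMeasurable] at h
  rw [pow_zero, mul_one] at h
  exact h.trans (mul_le_mul_of_nonneg_right (hN n hn) (hV0 x))

/-- Under Assumption (A), if the resampling schedule satisfies `δ_k → ∞`,
then `⦀L^(n) − π⦀_V → 0` as `n → ∞`: the chain with resampling from the past has limit
distribution `π`.  Convergence of the `V`-norm to `0` is expressed by: for every `ε > 0`
there is `N` such that for all `n ≥ N` and all measurable `f` with `|f|_V ≤ 1`,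
`|L^(n)f(x) − π(f)| ≤ ε V(x)` for every `x`. -/
theorem limit_distribution_of_resampling_from_past
    (P : X → Measure X) (hPmeas : Measurable P)
    (hPprob : ∀ x, IsProbabilityMeasure (P x))
    (π : Measure X) (hπ : IsProbabilityMeasure π) (hinv : π.bind P = π)
    (V : X → ℝ) (hVmeas : Measurable V) (hV1 : ∀ x, 1 ≤ V x)
    (ρ C0 : ℝ) (hρ0 : 0 < ρ) (hρ1 : ρ < 1) (hC0 : 0 ≤ C0)
    -- Assumption (A): `⦀P^n − π⦀_V ≤ C0 ρ^n` for all `n ≥ 0`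
    (hA : ∀ f : X → ℝ, Measurable f → (∀ x, |f x| ≤ V x) →
      ∀ (n : ℕ) (x : X),
        |∫ y, f y ∂(iter P n x) - ∫ y, f y ∂π| ≤ C0 * ρ ^ n * V x)
    -- the resampling schedule: a strictly increasing sequence of positive integers
    (a : ℕ → ℕ) (ha1 : 1 ≤ a 1) (hamono : ∀ k, 1 ≤ k → a k < a (k + 1))
    -- the resampling schedule satisfies `δ_k → ∞`
    (hdelta : Tendsto (delta ρ a) atTop atTop)
    -- the laws `L^(n)(x,·)` of the chain with resampling from the past, burn-in 0
    (L : ℕ → X → Measure X)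
    (hL0 : ∀ x, L 0 x = Measure.dirac x)
    (hLstep : ∀ n : ℕ, 1 ≤ n → (¬ ∃ k, 1 ≤ k ∧ a k = n) →
      ∀ x, L n x = (L (n - 1) x).bind P)
    (hLres : ∀ k, 1 ≤ k →
      ∀ x, L (a k) x = ((a k : ℝ≥0∞))⁻¹ • ∑ j ∈ Finset.range (a k), L j x) :
    ∀ ε : ℝ, 0 < ε → ∃ N : ℕ, ∀ n : ℕ, N ≤ n →
      ∀ f : X → ℝ, Measurable f → (∀ x, |f x| ≤ V x) →
        ∀ x, |∫ y, f y ∂(L n x) - ∫ y, f y ∂π| ≤ ε * V x :=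
  limit_distribution_of_resampling_from_past_general P hPmeas hPprob π hπ V hVmeas hV1 ρ C0 hρ0 hρ1
    hA a hamono hdelta L hL0 hLstep hLres

end ResamplingFromThePastLimit
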